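/- Consider the two-player mean-payoff game G with players ○ and □, vertex a controlled by ○ and vertex b controlled by □, and edges with weights (π_○, π_□): a → a with weight (0, 1), b → b with weight (1, 0), a → b with weight (2, 2), b → a with weight (2, 2). Then for every play ρ starting at a, there exists an SPE σ̄ in G_{∥a} with ⟨σ̄⟩_a = ρ if and only if μ_○(ρ) ≥ 1 and μ_□(ρ) ≥ 1. -/

import Mathlib

noncomputable section

open Filter

/-- Prepend a finite list to an infinite sequence. -/
def prependList {V : Type} (h : List V) (ρ : ℕ → V) : ℕ → V :=
  fun n => if hn : n < h.length then h.get ⟨n, hn⟩ else ρ (n - h.length)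

/-- A (turn-based, multiplayer) game on a graph: a finite directed graph `(V, E)`
in which every vertex has an outgoing edge, a partition of the vertices among the
players (given by `control`), and an outcome function `payoff : Π → V^ω → ℝ`. -/
structure GameStruct (P V : Type) where
  E : V → V → Prop
  total : ∀ v, ∃ w, E v w
  control : V → P
  payoff : P → (ℕ → V) → ℝ

namespace GameStruct

variable {P V : Type}

/-- A strategy: given the history before the current vertex and the current vertex,
choose a successor along an edge. -/
structure Strategy (G : GameStruct P V) where
  toFun : List V → V → V
  valid : ∀ h v, G.E v (toFun h v)

/-- A complete strategy profile. -/
abbrev Profile (G : GameStruct P V) := P → G.Strategy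

def step (G : GameStruct P V) (σ : G.Profile) (p : List V × V) : List V × V :=
  (p.1 ++ [p.2], (σ (G.control p.2)).toFun p.1 p.2)

/-- The play induced by the profile `σ` from vertex `v`, after the past history `h`. -/
def play (G : GameStruct P V) (σ : G.Profile) (h : List V) (v : V) : ℕ → V :=
  fun n => ((G.step σ)^[n] (h, v)).2

/-- An infinite path in the graph. -/
def IsPlay (G : GameStruct P V) (ρ : ℕ → V) : Prop := ∀ n, G.E (ρ n) (ρ (n + 1))

def IsPlayFrom (G : GameStruct P V) (v₀ : V) (ρ : ℕ → V) : Prop := ρ 0 = v₀ ∧ G.IsPlay ρ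

/-- A history: a finite nonempty path. -/
def IsHist (G : GameStruct P V) (H : List V) : Prop := H ≠ [] ∧ List.Chain' G.E H

/-- `hv` is a history of the initialized game `G_{∥v₀}` (here `h` is the part strictly
before the last vertex `v`; it may be empty, in which case `v = v₀`). -/
def IsHistFrom (G : GameStruct P V) (v₀ : V) (h : List V) (v : V) : Prop :=
  List.Chain' G.E (h ++ [v]) ∧ (h ++ [v]).head? = some v₀

/-- The (finite) history `H` is compatible with the strategy `σ` of player `j`. -/
def CompatList (G : GameStruct P V) (σ : G.Strategy) (j : P) (H : List V) : Prop :=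
  ∀ k u w, H[k]? = some u → H[k + 1]? = some w → G.control u = j →
    w = σ.toFun (H.take k) u

/-- The history `H` is compatible with `σ̄_{-i}`, i.e. with every strategy of the
profile except possibly that of player `i`. -/
def CompatExcept (G : GameStruct P V) (i : P) (σ : G.Profile) (H : List V) : Prop :=
  ∀ j, j ≠ i → G.CompatList (σ j) j H

/-- A play `ρ` is `l`-consistent for the requirement `l : V → ℝ ∪ {±∞}`. -/
def Consistent (G : GameStruct P V) (l : V → EReal) (ρ : ℕ → V) : Prop :=
  ∀ n, l (ρ n) ≤ (G.payoff (G.control (ρ n)) (fun k => ρ (n + k)) : EReal)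

variable [DecidableEq P]

/-- The set of `l`-rational strategy profiles (for the players other than `i`) from `v`.
A profile is identified with a complete profile whose `i`-component is irrelevant. -/
def LamRat (G : GameStruct P V) (l : V → EReal) (i : P) (v : V) : Set G.Profile :=
  { σ | ∃ σi : G.Strategy, ∀ h w, G.IsHistFrom v h w → G.CompatExcept i σ (h ++ [w]) →
      G.Consistent l (G.play (Function.update σ i σi) h w) }

/-- `sup_{σ_i} μ_i(⟨σ̄_{-i}, σ_i⟩_v)`. -/
def valAgainst (G : GameStruct P V) (i : P) (σ : G.Profile) (v : V) : EReal :=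
  ⨆ σi : G.Strategy, (G.payoff i (G.play (Function.update σ i σi) [] v) : EReal)

/-- The negotiation function, with the convention `inf ∅ = +∞`. -/
def nego (G : GameStruct P V) (l : V → EReal) : V → EReal :=
  fun v => ⨅ σ ∈ G.LamRat l (G.control v) v, G.valAgainst (G.control v) σ v

/-- A game with steady negotiation. -/
def SteadyNego (G : GameStruct P V) : Prop :=
  ∀ (i : P) (v : V) (l : V → EReal),
    G.LamRat l i v = ∅ ∨
      ∃ σ ∈ G.LamRat l i v, ∀ τ ∈ G.LamRat l i v, G.valAgainst i σ v ≤ G.valAgainst i τ v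

/-- Nash equilibrium in `G_{∥v₀}`. -/
def IsNE (G : GameStruct P V) (v₀ : V) (σ : G.Profile) : Prop :=
  ∀ (i : P) (σ' : G.Strategy),
    G.payoff i (G.play (Function.update σ i σ') [] v₀) ≤ G.payoff i (G.play σ [] v₀)

/-- `ε`-subgame-perfect equilibrium in `G_{∥v₀}`. -/
def IsEpsSPE (G : GameStruct P V) (v₀ : V) (ε : ℝ) (σ : G.Profile) : Prop :=
  ∀ h v, G.IsHistFrom v₀ h v → ∀ (i : P) (σ' : G.Strategy),
    G.payoff i (prependList h (G.play (Function.update σ i σ') h v)) ≤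
      G.payoff i (prependList h (G.play σ h v)) + ε

/-- `l` is an `ε`-fixed point of the negotiation function (`±∞` is within `ε` of itself). -/
def IsEFix (G : GameStruct P V) (ε : ℝ) (l : V → EReal) : Prop :=
  ∀ v, l v - (ε : EReal) ≤ G.nego l v ∧ G.nego l v ≤ l v + (ε : EReal)

/-- Prefix-independent game. -/
def PrefixIndependent (G : GameStruct P V) : Prop :=
  ∀ (h : List V) (ρ : ℕ → V), G.IsHist h → G.IsPlay ρ → ∀ i,
    G.payoff i (prependList h ρ) = G.payoff i ρ

/-- Well-initialized game: every vertex is reachable from `v₀`. -/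
def WellInit (G : GameStruct P V) (v₀ : V) : Prop :=
  ∀ v, Relation.ReflTransGen G.E v₀ v

/-- `G` is the mean-payoff game given by the weight function `π`. -/
def IsMeanPayoff (G : GameStruct P V) (π : P → V → V → ℚ) : Prop :=
  ∀ i ρ, G.payoff i ρ =
    Filter.liminf
      (fun n : ℕ => (∑ k ∈ Finset.range n, (π i (ρ k) (ρ (k + 1)) : ℝ)) / n)
      Filter.atTop

end GameStruct

/-! The game of Example 3 of the paper. -/

inductive Pl2 where
  | circ : Pl2
  | sq : Pl2
deriving DecidableEq

instance : Fintype Pl2 := ⟨{Pl2.circ, Pl2.sq}, fun x => by cases x <;> simp⟩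

inductive V17 where
  | a : V17
  | b : V17
deriving DecidableEq

instance : Fintype V17 := ⟨{V17.a, V17.b}, fun x => by cases x <;> simp⟩

def E17 : V17 → V17 → Prop := fun _ _ => True

def ctrl17 : V17 → Pl2 := fun v =>
  match v with
  | .a => .circ
  | .b => .sq

def w17 : Pl2 → V17 → V17 → ℚ
  | .circ, .a, .a => 0
  | .sq, .a, .a => 1
  | .circ, .b, .b => 1
  | .sq, .b, .b => 0
  | .circ, .a, .b => 2
  | .sq, .a, .b => 2
  | .circ, .b, .a => 2
  | .sq, .b, .a => 2


/-!
Against any profile, a player who always leaves his own vertex only takes edges worth at least 1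
to him, so in an SPE (already in a Nash equilibrium) both players get at least 1.

Conversely, let both players follow `ρ` and punish the last deviation, made at position `L`, by
staying put up to position `(L + 2) ^ 2` and then following the cycle `aaabbb`, worth 1 to both.
A play that eventually conforms to this profile is `ρ` or ends in the cycle, so from every history
on both players get at least 1. A player who deviates finitely often ends in the cycle. One who
deviates infinitely often completes infinitely many punishments, and when the punishment started
at `L` ends, self-loops being worth at most 1, his average is at most `1 + L / (L + 2) ^ 2`.
-/

open Topology Finset

-- `cesaro f 0 = 0`.
def cesaro (f : ℕ → ℝ) (n : ℕ) : ℝ := (∑ k ∈ range n, f k) / n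

lemma le_cesaro {f : ℕ → ℝ} {c : ℝ} (hc : ∀ k, c ≤ f k) {n : ℕ} (hn : 0 < n) :
    c ≤ cesaro f n := by
  rw [cesaro, le_div_iff₀ (by exact_mod_cast hn)]
  simpa [mul_comm] using card_nsmul_le_sum (range n) f c fun k _ => hc k

lemma cesaro_le {f : ℕ → ℝ} {c : ℝ} (hc : ∀ k, f k ≤ c) {n : ℕ} (hn : 0 < n) :
    cesaro f n ≤ c := by
  rw [cesaro, div_le_iff₀ (by exact_mod_cast hn)]
  simpa [mul_comm] using sum_le_card_nsmul (range n) f c fun k _ => hc k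

lemma le_liminf_cesaro {f : ℕ → ℝ} {c B : ℝ} (hc : ∀ k, c ≤ f k) (hB : ∀ k, f k ≤ B) :
    c ≤ liminf (cesaro f) atTop := by
  have hbdd : IsBoundedUnder (· ≤ ·) atTop (cesaro f) :=
    isBoundedUnder_of_eventually_le ((eventually_gt_atTop 0).mono fun _ hn => cesaro_le hB hn)
  exact le_liminf_of_le hbdd.isCoboundedUnder_ge
    ((eventually_gt_atTop 0).mono fun _ hn => le_cesaro hc hn)

lemma liminf_cesaro_le {f : ℕ → ℝ} {c : ℝ} (hf : ∀ k, 0 ≤ f k)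
    (h : ∀ ε > 0, ∃ᶠ n in atTop, ∑ k ∈ range n, f k ≤ (c + ε) * n) :
    liminf (cesaro f) atTop ≤ c := by
  refine le_of_forall_pos_le_add fun ε hε => liminf_le_of_frequently_le ?_ ?_
  · refine ((h ε hε).and_eventually (eventually_gt_atTop 0)).mono fun n ⟨hn, hpos⟩ => ?_
    rwa [cesaro, div_le_iff₀ (by exact_mod_cast hpos)]
  · exact isBoundedUnder_of_eventually_ge (Eventually.of_forall fun n =>
      div_nonneg (sum_nonneg fun k _ => hf k) n.cast_nonneg)

lemma tendsto_cesaro_of_abs_sum_sub_le {f : ℕ → ℝ} {c C : ℝ}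
    (h : ∀ n, |∑ k ∈ range n, (f k - c)| ≤ C) : Tendsto (cesaro f) atTop (𝓝 c) := by
  have h0 : Tendsto (fun n => cesaro f n - c) atTop (𝓝 0) := by
    refine squeeze_zero_norm' ?_ (tendsto_const_div_atTop_nhds_zero_nat C)
    filter_upwards [eventually_gt_atTop 0] with n hn
    have hn' : (0 : ℝ) < n := by exact_mod_cast hn
    have hsub : cesaro f n - c = (∑ k ∈ range n, (f k - c)) / n := by
      rw [cesaro, sum_sub_distrib, sum_const, card_range, nsmul_eq_mul]
      field_simp
    rw [hsub, Real.norm_eq_abs, abs_div, abs_of_pos hn']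
    exact div_le_div_of_nonneg_right (h n) hn'.le
  simpa using h0.add_const c

lemma tendsto_cesaro_congr {f g : ℕ → ℝ} {c : ℝ} (hfg : f =ᶠ[atTop] g)
    (hg : Tendsto (cesaro g) atTop (𝓝 c)) : Tendsto (cesaro f) atTop (𝓝 c) := by
  obtain ⟨N, hN⟩ := eventually_atTop.1 hfg
  have hdiff : ∀ n ≥ N, (∑ k ∈ range N, (f k - g k)) / n = cesaro f n - cesaro g n := by
    intro n hn
    rw [cesaro, cesaro, ← sub_div, ← sum_sub_distrib, ← sum_range_add_sum_Ico _ hn,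
      sum_eq_zero fun k hk => sub_eq_zero.2 (hN k (mem_Ico.1 hk).1), add_zero]
  have h0 : Tendsto (fun n => cesaro f n - cesaro g n) atTop (𝓝 0) :=
    (tendsto_const_div_atTop_nhds_zero_nat _).congr' (eventually_atTop.2 ⟨N, hdiff⟩)
  simpa using h0.add hg

-- `G.IsMeanPayoff π` unfolds to `∀ i ρ, G.payoff i ρ = meanPayoff π i ρ`.
def meanPayoff {P V : Type} (π : P → V → V → ℚ) (i : P) (ρ : ℕ → V) : ℝ :=
  liminf (cesaro fun k => (π i (ρ k) (ρ (k + 1)) : ℝ)) atTop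

lemma prependList_nil {V : Type} (ρ : ℕ → V) : prependList [] ρ = ρ := by
  ext n
  simp [prependList]

lemma prependList_length_add {V : Type} (h : List V) (ρ : ℕ → V) (k : ℕ) :
    prependList h ρ (h.length + k) = ρ k := by
  simp [prependList]

lemma map_range_prependList {V : Type} (h : List V) (ρ : ℕ → V) (k : ℕ) :
    (List.range (h.length + k)).map (prependList h ρ) = h ++ (List.range k).map ρ := by
  rw [List.range_add, List.map_append, List.map_map]
  congr 1
  · refine List.ext_getElem (by simp) fun n h₁ h₂ => ?_
    simp [prependList, show n < h.length by simpa using h₁]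
  · simp [Function.comp_def, prependList_length_add]

namespace GameStruct

variable {P V : Type} {G : GameStruct P V}

lemma IsEpsSPE.isNE [DecidableEq P] {v₀ : V} {σ : G.Profile}
    (hσ : G.IsEpsSPE v₀ 0 σ) : G.IsNE v₀ σ := by
  intro i σ'
  simpa [prependList_nil] using hσ [] v₀ ⟨List.isChain_singleton v₀, rfl⟩ i σ'

variable (G)

lemma play_iterate (σ : G.Profile) (h : List V) (v : V) (n : ℕ) :
    (G.step σ)^[n] (h, v) = (h ++ (List.range n).map (G.play σ h v), G.play σ h v n) := by
  induction n with
  | zero => simp [play]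
  | succ n ih =>
    refine Prod.ext ?_ rfl
    rw [Function.iterate_succ_apply', ih]
    simp [step, List.range_succ]

lemma play_succ (σ : G.Profile) (h : List V) (v : V) (n : ℕ) :
    G.play σ h v (n + 1) = (σ (G.control (G.play σ h v n))).toFun
      (h ++ (List.range n).map (G.play σ h v)) (G.play σ h v n) := by
  change ((G.step σ)^[n + 1] (h, v)).2 = _
  rw [Function.iterate_succ_apply', play_iterate]
  rfl

lemma prependList_play_succ (σ : G.Profile) (h : List V) (v : V) {n : ℕ} (hn : h.length ≤ n) :
    prependList h (G.play σ h v) (n + 1) =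
      (σ (G.control (prependList h (G.play σ h v) n))).toFun
        ((List.range n).map (prependList h (G.play σ h v))) (prependList h (G.play σ h v) n) := by
  obtain ⟨k, rfl⟩ := Nat.exists_eq_add_of_le hn
  rw [add_assoc, prependList_length_add, prependList_length_add, map_range_prependList, play_succ]

lemma prependList_play_of_le (σ τ : G.Profile) (h : List V) (v : V) {n : ℕ}
    (hn : n ≤ h.length) : prependList h (G.play σ h v) n = prependList h (G.play τ h v) n := by
  unfold prependList
  split_ifs with hlt
  · rfl
  · rw [show n - h.length = 0 by omega]
    rfl

end GameStruct

section Punishment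

variable {V : Type} [DecidableEq V] (ρ θ : ℕ → V)

def horizon (L : ℕ) : ℕ := (L + 2) ^ 2

lemma lt_horizon (L : ℕ) : L < horizon L :=
  (Nat.lt_add_of_pos_right two_pos).trans_le (Nat.le_self_pow two_ne_zero _)

-- `s` is the position of the last deviation in `X` before `n`, if any.
def prescribed (X : ℕ → V) : Option ℕ → ℕ → V
  | none, n => ρ n
  | some L, n => if n ≤ horizon L then X (n - 1) else θ n

def lastDeviation (X : ℕ → V) : ℕ → Option ℕ
  | 0 => none
  | n + 1 => if X n = prescribed ρ θ X (lastDeviation X n) n then lastDeviation X n else some n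

def prescription (X : ℕ → V) (n : ℕ) : V := prescribed ρ θ X (lastDeviation ρ θ X n) n

variable {ρ θ}

lemma lastDeviation_succ (X : ℕ → V) (n : ℕ) :
    lastDeviation ρ θ X (n + 1) =
      if X n = prescription ρ θ X n then lastDeviation ρ θ X n else some n :=
  rfl

lemma lastDeviation_congr {X Y : ℕ → V} {n : ℕ} (h : ∀ k < n, X k = Y k) :
    lastDeviation ρ θ X n = lastDeviation ρ θ Y n := by
  induction n with
  | zero => rfl
  | succ n ih =>
    have hlast := ih fun k hk => h k (by omega)
    have hpresc : prescription ρ θ X n = prescription ρ θ Y n := by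
      unfold prescription
      rw [hlast]
      cases lastDeviation ρ θ Y n <;> simp only [prescribed, h (n - 1) (by omega)]
    rw [lastDeviation_succ, lastDeviation_succ, h n n.lt_add_one, hpresc, hlast]

lemma prescription_congr {X Y : ℕ → V} {n : ℕ} (h : ∀ k < n, X k = Y k) :
    prescription ρ θ X n = prescription ρ θ Y n := by
  cases n with
  | zero => rfl
  | succ n =>
    unfold prescription
    rw [lastDeviation_congr h]
    cases lastDeviation ρ θ Y (n + 1) <;>
      simp only [prescribed, Nat.add_sub_cancel, h n n.lt_add_one]

lemma lastDeviation_eq_none_iff {X : ℕ → V} {n : ℕ} :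
    lastDeviation ρ θ X n = none ↔ ∀ k < n, X k = prescription ρ θ X k := by
  induction n with
  | zero => simp [lastDeviation]
  | succ n ih =>
    rw [lastDeviation_succ]
    split_ifs with hn
    · rw [ih]
      exact ⟨fun h k hk => (Nat.lt_succ_iff_lt_or_eq.1 hk).elim (h k) (· ▸ hn),
        fun h k hk => h k (by omega)⟩
    · exact iff_of_false (by simp) fun h => hn (h n n.lt_add_one)

lemma lastDeviation_eq_of_conforms {X : ℕ → V} {N n : ℕ} (hNn : N ≤ n)
    (h : ∀ k, N ≤ k → k < n → X k = prescription ρ θ X k) :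
    lastDeviation ρ θ X n = lastDeviation ρ θ X N := by
  induction n, hNn using Nat.le_induction with
  | base => rfl
  | succ n hNn ih =>
    rw [lastDeviation_succ, if_pos (h n hNn n.lt_add_one), ih fun k hk hkn => h k hk (by omega)]

lemma prescription_self (n : ℕ) : prescription ρ θ ρ n = ρ n := by
  have hnone : ∀ n, lastDeviation ρ θ ρ n = none := by
    intro n
    induction n with
    | zero => rfl
    | succ n ih => rw [lastDeviation_succ, prescription, ih, prescribed, if_pos rfl]
  rw [prescription, hnone]
  rfl

lemma eq_of_forall_conforms {X : ℕ → V} (h : ∀ n, X n = prescription ρ θ X n) : X = ρ := by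
  ext n
  rw [h n, prescription, lastDeviation_eq_none_iff.2 fun k _ => h k]
  rfl

lemma eq_of_agree_of_conforms {X Y : ℕ → V} {m : ℕ} (hXY : ∀ n ≤ m, X n = Y n)
    (hX : ∀ n, m ≤ n → X (n + 1) = prescription ρ θ X (n + 1))
    (hY : ∀ n, m ≤ n → Y (n + 1) = prescription ρ θ Y (n + 1)) : X = Y := by
  ext n
  induction n using Nat.strong_induction_on with
  | _ n ih =>
    rcases le_or_gt n m with hn | hn
    · exact hXY n hn
    · obtain ⟨n, rfl⟩ := Nat.exists_eq_add_of_lt hn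
      rw [hX _ (by omega), hY _ (by omega), prescription_congr ih]

lemma eq_or_eventually_eq_of_conforms {X : ℕ → V} {N : ℕ}
    (h : ∀ n ≥ N, X n = prescription ρ θ X n) : X = ρ ∨ ∀ᶠ n in atTop, X n = θ n := by
  cases hs : lastDeviation ρ θ X N with
  | none =>
    refine Or.inl (eq_of_forall_conforms (θ := θ) fun n => ?_)
    rcases lt_or_ge n N with hn | hn
    · exact lastDeviation_eq_none_iff.1 hs n hn
    · exact h n hn
  | some L =>
    refine Or.inr (eventually_atTop.2 ⟨max N (horizon L + 1), fun n hn => ?_⟩)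
    rw [h n (by omega), prescription, lastDeviation_eq_of_conforms (by omega) fun k hk _ => h k hk,
      hs, prescribed, if_neg (by omega)]

lemma prescription_eq_prev {X : ℕ → V} {L n : ℕ} (hL : X L ≠ prescription ρ θ X L) (hLn : L < n)
    (hn : n ≤ horizon L) (h : ∀ k, L < k → k < n → X k = prescription ρ θ X k) :
    prescription ρ θ X n = X (n - 1) := by
  have hlast : lastDeviation ρ θ X n = some L := by
    rw [lastDeviation_eq_of_conforms hLn h, lastDeviation_succ, if_neg hL]
  rw [prescription, hlast, prescribed, if_pos hn]

lemma eq_of_punished {X : ℕ → V} {L n : ℕ} (hL : X L ≠ prescription ρ θ X L) (hn : n ≤ horizon L)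
    (h : ∀ k, L < k → k ≤ n → X k = prescription ρ θ X k) : ∀ k, L ≤ k → k ≤ n → X k = X L := by
  intro k hLk hkn
  induction k, hLk using Nat.le_induction with
  | base => rfl
  | succ k hLk ih =>
    rw [h (k + 1) (by omega) hkn,
      prescription_eq_prev hL (by omega) (by omega) fun j hj hjk => h j hj (by omega),
      Nat.add_sub_cancel, ih (by omega)]

lemma punished_or_moves {X : ℕ → V} {L : ℕ} (hL : X L ≠ prescription ρ θ X L) :
    (∀ k, L ≤ k → k ≤ horizon L → X k = X L) ∨
      ∃ n ≥ L, X n = X L ∧ X (n + 1) ≠ prescription ρ θ X (n + 1) ∧ X (n + 1) ≠ X L := by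
  by_cases hmove : ∃ k, L < k ∧ k ≤ horizon L ∧ X k ≠ prescription ρ θ X k
  · obtain ⟨hLk, hk, hdev⟩ := Nat.find_spec hmove
    have hbefore : ∀ j, L < j → j < Nat.find hmove → X j = prescription ρ θ X j := by
      intro j hLj hj
      simpa [hLj, (hj.trans_le hk).le] using Nat.find_min hmove hj
    obtain ⟨n, hn⟩ := Nat.exists_eq_add_of_lt hLk
    have hconst := eq_of_punished hL (n := L + n) (by omega) fun j hj hjn => hbefore j hj (by omega)
    have hprev := prescription_eq_prev hL hLk hk hbefore
    rw [hn] at hdev hprev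
    refine Or.inr ⟨L + n, by omega, hconst _ (by omega) le_rfl, hdev, ?_⟩
    rw [← hconst (L + n) (by omega) le_rfl, ← Nat.add_sub_cancel (n := L + n) (m := 1), ← hprev]
    exact hdev
  · push Not at hmove
    exact Or.inl (eq_of_punished hL le_rfl fun k hLk hk => hmove k hLk hk)

end Punishment

-- Along this cycle both players get mean payoff 1.
def target (n : ℕ) : V17 := if n % 6 < 3 then .a else .b

def V17.other : V17 → V17
  | .a => .b
  | .b => .a

lemma V17.other_ne (v : V17) : v.other ≠ v := by
  cases v <;> simp [V17.other]

lemma ctrl17_injective : Function.Injective ctrl17 := by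
  intro u w
  cases u <;> cases w <;> simp [ctrl17]

lemma w17_nonneg (i : Pl2) (u w : V17) : (0 : ℝ) ≤ w17 i u w := by
  cases i <;> cases u <;> cases w <;> norm_num [w17]

lemma w17_le_two (i : Pl2) (u w : V17) : (w17 i u w : ℝ) ≤ 2 := by
  cases i <;> cases u <;> cases w <;> norm_num [w17]

lemma w17_self_le_one (i : Pl2) (u : V17) : (w17 i u u : ℝ) ≤ 1 := by
  cases i <;> cases u <;> norm_num [w17]

lemma one_le_w17 {i : Pl2} {u w : V17} (h : w ≠ u ∨ ctrl17 u ≠ i) : (1 : ℝ) ≤ w17 i u w := by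
  cases i <;> cases u <;> cases w <;> simp_all [ctrl17, w17]

lemma abs_sum_target_weights_sub_one_le (i : Pl2) (n : ℕ) :
    |∑ k ∈ range n, ((w17 i (target k) (target (k + 1)) : ℝ) - 1)| ≤ 2 := by
  set S : ℕ → ℝ := fun n => ∑ k ∈ range n, ((w17 i (target k) (target (k + 1)) : ℝ) - 1)
  have hperiod : Function.Periodic S 6 := by
    intro n
    have hcycle : ∑ k ∈ range 6, ((w17 i (target k) (target (k + 1)) : ℝ) - 1) = 0 := by
      cases i <;> norm_num [sum_range_succ, target, w17]
    have hshift : ∀ k, target (6 + k) = target k := fun k => by simp [target]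
    rw [add_comm]
    simp only [S, sum_range_add, add_assoc, hshift, hcycle, zero_add]
  change |S n| ≤ 2
  rw [← hperiod.map_mod_nat]
  have hr : n % 6 < 6 := Nat.mod_lt _ (by norm_num)
  generalize n % 6 = r at hr ⊢
  interval_cases r <;> cases i <;> norm_num [S, sum_range_succ, target, w17]

lemma meanPayoff_eq_one_of_eventually_target {X : ℕ → V17} (i : Pl2)
    (hX : ∀ᶠ n in atTop, X n = target n) : meanPayoff w17 i X = 1 := by
  have hweights : (fun k => (w17 i (X k) (X (k + 1)) : ℝ)) =ᶠ[atTop]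
      fun k => (w17 i (target k) (target (k + 1)) : ℝ) :=
    (hX.and ((tendsto_add_atTop_nat 1).eventually hX)).mono fun k hk => by simp only [hk.1, hk.2]
  exact (tendsto_cesaro_congr hweights
    (tendsto_cesaro_of_abs_sum_sub_le (abs_sum_target_weights_sub_one_le i))).liminf_eq

lemma one_le_meanPayoff_of_conforms {ρ Y : ℕ → V17} {i : Pl2} {N : ℕ}
    (hρ : 1 ≤ meanPayoff w17 i ρ) (hY : ∀ n ≥ N, Y n = prescription ρ target Y n) :
    1 ≤ meanPayoff w17 i Y := by
  rcases eq_or_eventually_eq_of_conforms hY with rfl | htarget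
  · exact hρ
  · exact (meanPayoff_eq_one_of_eventually_target i htarget).ge

-- On the opponent's vertex `i` cannot deviate, and leaving his own vertex takes him there.
lemma exists_punishment_completed {ρ X : ℕ → V17} {i : Pl2} {m : ℕ}
    (hX : ∀ n ≥ m, ctrl17 (X n) ≠ i → X (n + 1) = prescription ρ target X (n + 1))
    {L : ℕ} (hmL : m ≤ L) (hL : X L ≠ prescription ρ target X L) :
    ∃ L' ≥ L, ∀ k, L' ≤ k → k ≤ horizon L' → X k = X L' := by
  have hopponent : ∀ L ≥ m, X L ≠ prescription ρ target X L → ctrl17 (X L) ≠ i →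
      ∀ k, L ≤ k → k ≤ horizon L → X k = X L := by
    intro L hmL hL hi
    rcases punished_or_moves hL with hconst | ⟨n, hLn, hn, hdev, -⟩
    · exact hconst
    · exact absurd (hX n (by omega) (hn ▸ hi)) hdev
  by_cases hi : ctrl17 (X L) = i
  · rcases punished_or_moves hL with hconst | ⟨n, hLn, -, hdev, hmove⟩
    · exact ⟨L, le_rfl, hconst⟩
    · exact ⟨n + 1, by omega, hopponent (n + 1) (by omega) hdev
        fun h => hmove (ctrl17_injective (h.trans hi.symm))⟩
  · exact ⟨L, le_rfl, hopponent L hmL hL hi⟩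

lemma sum_weights_le_of_const {X : ℕ → V17} (i : Pl2) {L H : ℕ} (hLH : L ≤ H)
    (hX : ∀ k, L ≤ k → k ≤ H → X k = X L) :
    ∑ k ∈ range H, (w17 i (X k) (X (k + 1)) : ℝ) ≤ H + L := by
  rw [← sum_range_add_sum_Ico _ hLH]
  have hbefore : ∑ k ∈ range L, (w17 i (X k) (X (k + 1)) : ℝ) ≤ L * 2 := by
    simpa using sum_le_card_nsmul (range L) _ _ fun k _ => w17_le_two i (X k) (X (k + 1))
  have hduring : ∑ k ∈ Ico L H, (w17 i (X k) (X (k + 1)) : ℝ) ≤ (H - L : ℕ) * 1 := by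
    refine (sum_le_card_nsmul (Ico L H) (fun k => (w17 i (X k) (X (k + 1)) : ℝ)) 1 ?_).trans
      (by simp)
    intro k hk
    obtain ⟨hLk, hkH⟩ := mem_Ico.1 hk
    rw [hX k hLk hkH.le, hX (k + 1) (by omega) hkH]
    exact w17_self_le_one i (X L)
  push_cast [Nat.cast_sub hLH] at hduring
  linarith

lemma meanPayoff_le_one_of_frequently_deviates {ρ X : ℕ → V17} {i : Pl2} {m : ℕ}
    (hX : ∀ n ≥ m, ctrl17 (X n) ≠ i → X (n + 1) = prescription ρ target X (n + 1))
    (hdev : ∃ᶠ n in atTop, X n ≠ prescription ρ target X n) : meanPayoff w17 i X ≤ 1 := by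
  refine liminf_cesaro_le (fun k => w17_nonneg i _ _) fun ε hε => frequently_atTop.2 fun N => ?_
  obtain ⟨L, hL, hdevL⟩ := frequently_atTop.1 hdev (max (max N m) ⌈1 / ε⌉₊)
  obtain ⟨L', hLL', hconst⟩ := exists_punishment_completed hX (by omega) hdevL
  refine ⟨horizon L', by have := lt_horizon L'; omega, ?_⟩
  have hεL : 1 ≤ ε * (L' + 2) := by
    have hceil : 1 / ε ≤ L' := (Nat.le_ceil _).trans (by exact_mod_cast (by omega : ⌈1 / ε⌉₊ ≤ L'))
    rw [div_le_iff₀ hε] at hceil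
    nlinarith
  calc ∑ k ∈ range (horizon L'), (w17 i (X k) (X (k + 1)) : ℝ)
      ≤ horizon L' + L' := sum_weights_le_of_const i (lt_horizon L').le hconst
    _ ≤ (1 + ε) * horizon L' := by
      push_cast [horizon]
      nlinarith [(L'.cast_nonneg : (0 : ℝ) ≤ L')]

lemma meanPayoff_le_of_unilateral {ρ X Y : ℕ → V17} {i : Pl2} {m : ℕ}
    (hρ : 1 ≤ meanPayoff w17 i ρ) (hXY : ∀ n ≤ m, X n = Y n)
    (hX : ∀ n ≥ m, ctrl17 (X n) ≠ i → X (n + 1) = prescription ρ target X (n + 1))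
    (hY : ∀ n ≥ m, Y (n + 1) = prescription ρ target Y (n + 1)) :
    meanPayoff w17 i X ≤ meanPayoff w17 i Y := by
  have hYval : 1 ≤ meanPayoff w17 i Y :=
    one_le_meanPayoff_of_conforms (N := m + 1) hρ fun n hn => by
      obtain ⟨n, rfl⟩ := Nat.exists_eq_add_of_lt hn
      exact hY (m + n) (by omega)
  by_cases hfin : ∃ N, ∀ n ≥ N, X n = prescription ρ target X n
  · obtain ⟨N, hN⟩ := hfin
    rcases eq_or_eventually_eq_of_conforms hN with rfl | htarget
    · rw [eq_of_agree_of_conforms hXY (fun n _ => (prescription_self (n + 1)).symm) hY]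
    · exact (meanPayoff_eq_one_of_eventually_target i htarget).le.trans hYval
  · have hdev : ∃ᶠ n in atTop, X n ≠ prescription ρ target X n := by
      simpa [Filter.Frequently, eventually_atTop] using hfin
    exact (meanPayoff_le_one_of_frequently_deviates hX hdev).trans hYval

section Strategies

variable (G : GameStruct Pl2 V17) (hE : G.E = E17)

-- The history `h v` is read as a sequence padded with `a`; the padding is never looked at.
def punishingStrategy (ρ : ℕ → V17) : G.Strategy where
  toFun h v := prescription ρ target (fun k => (h ++ [v]).getD k .a) (h.length + 1)
  valid _ _ := by rw [hE]; trivial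

def leavingStrategy : G.Strategy where
  toFun _ v := v.other
  valid _ _ := by rw [hE]; trivial

lemma punishingStrategy_toFun (ρ X : ℕ → V17) (n : ℕ) :
    (punishingStrategy G hE ρ).toFun ((List.range n).map X) (X n) =
      prescription ρ target X (n + 1) := by
  change prescription ρ target _ (((List.range n).map X).length + 1) = _
  rw [List.length_map, List.length_range]
  refine prescription_congr fun k hk => ?_
  rw [← List.map_singleton, ← List.map_append, ← List.range_succ,
    List.getD_eq_getElem _ _ (by simpa using hk)]
  simp

variable {G hE}

lemma prependList_play_conforms {ρ : ℕ → V17} {τ : G.Profile} {h : List V17} {v : V17} {n : ℕ}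
    (hn : h.length ≤ n)
    (hτ : τ (G.control (prependList h (G.play τ h v) n)) = punishingStrategy G hE ρ) :
    prependList h (G.play τ h v) (n + 1) =
      prescription ρ target (prependList h (G.play τ h v)) (n + 1) := by
  rw [G.prependList_play_succ τ h v hn, hτ, punishingStrategy_toFun]

lemma play_punishingStrategy (ρ : ℕ → V17) :
    G.play (fun _ => punishingStrategy G hE ρ) [] (ρ 0) = ρ := by
  refine eq_of_forall_conforms (θ := target) fun n => ?_
  cases n with
  | zero => rfl
  | succ n =>
    rw [G.play_succ, List.nil_append]
    exact punishingStrategy_toFun G hE ρ _ n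

lemma one_le_meanPayoff_leavingStrategy (hc : G.control = ctrl17) (σ : G.Profile) (i : Pl2)
    (v₀ : V17) :
    1 ≤ meanPayoff w17 i (G.play (Function.update σ i (leavingStrategy G hE)) [] v₀) := by
  refine le_liminf_cesaro (fun k => one_le_w17 ?_) fun k => w17_le_two i _ _
  rw [G.play_succ, ← hc]
  by_cases hi : G.control (G.play (Function.update σ i (leavingStrategy G hE)) [] v₀ k) = i
  · rw [hi, Function.update_self]
    exact Or.inl (V17.other_ne _)
  · exact Or.inr hi

end Strategies

open GameStruct in
/-- In the game of Example 3, a play `ρ` from `a` is the outcome of an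
SPE iff both players get payoff at least `1` in `ρ`. -/
theorem example_game_SPE_plays
    (G : GameStruct Pl2 V17) (hE : G.E = E17) (hc : G.control = ctrl17)
    (hmp : G.IsMeanPayoff w17) :
    ∀ ρ : ℕ → V17, G.IsPlayFrom V17.a ρ →
      ((∃ σ : G.Profile, G.IsEpsSPE V17.a 0 σ ∧ G.play σ [] V17.a = ρ) ↔
        (1 ≤ G.payoff Pl2.circ ρ ∧ 1 ≤ G.payoff Pl2.sq ρ)) := by
  rintro ρ ⟨hρ0, -⟩
  have hpayoff : ∀ i X, G.payoff i X = meanPayoff w17 i X := hmp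
  constructor
  · rintro ⟨σ, hσ, rfl⟩
    have hval : ∀ i, 1 ≤ G.payoff i (G.play σ [] V17.a) := fun i =>
      (hpayoff i _ ▸ one_le_meanPayoff_leavingStrategy hc σ i V17.a).trans
        (hσ.isNE i (leavingStrategy G hE))
    exact ⟨hval Pl2.circ, hval Pl2.sq⟩
  · rintro ⟨hcirc, hsq⟩
    refine ⟨fun _ => punishingStrategy G hE ρ, fun h v _ i σ' => ?_,
      hρ0 ▸ play_punishingStrategy ρ⟩
    rw [add_zero, hpayoff, hpayoff]
    refine meanPayoff_le_of_unilateral (m := h.length) ?_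
      (fun n hn => G.prependList_play_of_le _ _ h v hn)
      (fun n hn hi => prependList_play_conforms hn (Function.update_of_ne (hc ▸ hi) _ _))
      (fun n hn => prependList_play_conforms hn rfl)
    cases i <;> rwa [← hpayoff]
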